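/- Let Q be a basket of type 1/r(a, -a, 1) with index r ≥ 37. Then l(Q, 18) > 52. (In particular, for r ≥ 37 one has l(1/r(1,-1,1), 18) = ∑_{j=1}^{17} j(r - j)/(2r) ≥ ∑_{j=1}^{17} j(37 - j)/74 > 52.) -/

import Mathlib

/-- The Reid correction term `l(r, b, m) = ∑_{j=1}^{m-1} \overline{bj}(r-\overline{bj})/(2r)`,
where `\overline{bj}` is the smallest non-negative residue of `b*j` mod `r`.
(The `j = 0` term vanishes, so we may sum over `j ∈ range m`.) -/
def reidL (r b m : ℕ) : ℚ :=
  ∑ j ∈ Finset.range m,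
    (((b * j) % r : ℕ) : ℚ) * ((r : ℚ) - (((b * j) % r : ℕ) : ℚ)) / (2 * r)

/-- A basket of type `1/r(a, -a, 1)`: a pair of integers `(r, a)` with `r ≥ 2`,
`0 < a < r` and `gcd(a, r) = 1`. -/
structure Basket where
  r : ℕ
  a : ℕ
  two_le_r : 2 ≤ r
  a_pos : 0 < a
  a_lt_r : a < r
  coprime : Nat.Coprime a r

/-- The unique `b` with `0 < b < r` and `a * b ≡ 1 (mod r)`. -/
def Basket.binv (Q : Basket) : ℕ := ((Q.a : ZMod Q.r)⁻¹).val

/-- The correction term `l(Q, m)` of a basket. -/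
def Basket.l (Q : Basket) (m : ℕ) : ℚ := reidL Q.r Q.binv m

/-- `Δ_n(Q) := n² l(Q,2) + l(Q,n) - l(Q,n+1)`. -/
def Basket.delta (Q : Basket) (n : ℕ) : ℚ :=
  (n : ℚ) ^ 2 * Q.l 2 + Q.l n - Q.l (n + 1)

/-- A formal basket datum with `χ = 1`: a finite multiset of baskets together
with a positive rational number `K`. -/
structure FormalDatum where
  B : Multiset Basket
  K : ℚ
  K_pos : 0 < K

/-- The formal plurigenus `P(m) = (1/12)m(m-1)(2m-1)K - (2m-1) + ∑_{Q ∈ B} l(Q, m)`. -/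
def FormalDatum.P (D : FormalDatum) (m : ℕ) : ℚ :=
  (1 / 12 : ℚ) * m * (m - 1) * (2 * m - 1) * D.K - (2 * m - 1)
    + (D.B.map (fun Q => Q.l m)).sum

/-!
Write `x_j` for the residue of `b j` mod `r` and `d_j = min(x_j, r - x_j)`. The `j`-th term of
`l(r, b, m)` is `T_r(d_j)` with `T_r(x) = x(r - x)/(2r)`, which increases on `[0, r/2]`. Since
`b` is a unit mod `r` and `j + k < r` for distinct `j, k < m`, the `d_j` (`1 ≤ j < m`) are distinct
points of `[1, r/2]`; so the `i`-th smallest is at least `i` and `l(r, b, m) ≥ l(r, 1, m)`.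
Finally `T_r(j) = j/2 - j²/(2r)` grows with `r`, so for `r ≥ 37` we may compare with `r = 37`.
-/

open Finset

def reidTerm (r x : ℕ) : ℚ := (x : ℚ) * ((r : ℚ) - x) / (2 * r)

lemma reidL_eq_sum_reidTerm (r b m : ℕ) :
    reidL r b m = ∑ j ∈ range m, reidTerm r (b * j % r) := rfl

lemma reidTerm_sub_self {r x : ℕ} (hx : x ≤ r) : reidTerm r (r - x) = reidTerm r x := by
  unfold reidTerm
  push_cast [hx]
  ring

lemma reidTerm_min_sub {r x : ℕ} (hx : x ≤ r) : reidTerm r (min x (r - x)) = reidTerm r x := by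
  rcases min_choice x (r - x) with h | h <;> rw [h]
  exact reidTerm_sub_self hx

lemma reidTerm_monotoneOn (r : ℕ) : MonotoneOn (reidTerm r) (Set.Iic (r / 2)) := by
  intro x hx y hy hxy
  have hr : (x : ℚ) + y ≤ r := by
    simp only [Set.mem_Iic] at hx hy
    exact_mod_cast (by omega : x + y ≤ r)
  have hxy' : (x : ℚ) ≤ y := by exact_mod_cast hxy
  unfold reidTerm
  apply div_le_div_of_nonneg_right _ (by positivity)
  nlinarith

lemma reidTerm_le_reidTerm_of_le {s r x : ℕ} (hx : x ≤ s) (hs : s ≤ r) :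
    reidTerm s x ≤ reidTerm r x := by
  rcases Nat.eq_zero_or_pos s with rfl | hs0
  · simp [reidTerm, Nat.le_zero.mp hx]
  have hsr : (s : ℚ) ≤ r := by exact_mod_cast hs
  have hs0' : (0 : ℚ) < s := by exact_mod_cast hs0
  unfold reidTerm
  rw [div_le_div_iff₀ (by positivity) (by linarith)]
  nlinarith [mul_nonneg (sq_nonneg (x : ℚ)) (sub_nonneg.2 hsr)]

lemma sum_Icc_card_le_sum_of_monotoneOn {β : Type*} [AddCommMonoid β] [PartialOrder β]
    [IsOrderedAddMonoid β] {f : ℕ → β} {N : ℕ} (hf : MonotoneOn f (Set.Icc 1 N))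
    (S : Finset ℕ) (hSN : S ⊆ Icc 1 N) : ∑ i ∈ Icc 1 #S, f i ≤ ∑ x ∈ S, f x := by
  induction S using Finset.strongInduction with
  | H S ih =>
  rcases S.eq_empty_or_nonempty with rfl | hne
  · simp
  set M := S.max' hne
  have hM : M ∈ S := S.max'_mem hne
  have hcard : #S ≤ M := by
    simpa using card_le_card fun x hx => mem_Icc.mpr ⟨(mem_Icc.mp (hSN hx)).1, S.le_max' x hx⟩
  have hcard' : #(S.erase M) + 1 = #S := card_erase_add_one hM
  calc ∑ i ∈ Icc 1 #S, f i = ∑ i ∈ Icc 1 #(S.erase M), f i + f #S := by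
        rw [← hcard', sum_Icc_succ_top (by omega)]
    _ ≤ ∑ x ∈ S.erase M, f x + f M := by
        have hMN := mem_Icc.mp (hSN hM)
        refine add_le_add (ih _ (erase_ssubset hM) ((erase_subset M S).trans hSN)) ?_
        exact hf (Set.mem_Icc.mpr ⟨by omega, by omega⟩) (Set.mem_Icc.mpr hMN) hcard
    _ = ∑ x ∈ S, f x := sum_erase_add S f hM

lemma reidL_eq_sum_Icc (r b m : ℕ) :
    reidL r b m = ∑ j ∈ Icc 1 (m - 1), reidTerm r (b * j % r) := by
  rcases m with _ | m
  · simp [reidL]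
  · rw [reidL_eq_sum_reidTerm, sum_range_eq_add_Ico _ (by omega : 0 < m + 1), Nat.add_sub_cancel,
      Ico_add_one_right_eq_Icc]
    simp [reidTerm]

lemma reidL_one_le_reidL_one {s r m : ℕ} (hm : m ≤ s) (hs : s ≤ r) :
    reidL s 1 m ≤ reidL r 1 m := by
  simp only [reidL_eq_sum_reidTerm, one_mul]
  refine sum_le_sum fun j hj => ?_
  have hj := mem_range.mp hj
  rw [Nat.mod_eq_of_lt (by omega), Nat.mod_eq_of_lt (by omega)]
  exact reidTerm_le_reidTerm_of_le (by omega) hs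

lemma mul_mod_ne_zero_of_coprime {r b j : ℕ} (hb : b.Coprime r) (hj : 0 < j) (hjr : j < r) :
    b * j % r ≠ 0 := fun h => by
  have := Nat.le_of_dvd hj (hb.symm.dvd_of_dvd_mul_left (Nat.dvd_of_mod_eq_zero h))
  omega

lemma injOn_min_mod_sub_mod {r b m : ℕ} (hb : b.Coprime r) (hm : 2 * m ≤ r + 2) :
    Set.InjOn (fun j => min (b * j % r) (r - b * j % r)) ↑(Icc 1 (m - 1)) := by
  intro j hj k hk hjk
  by_contra hne
  simp only [coe_Icc, Set.mem_Icc] at hj hk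
  have hxj := Nat.mod_lt (b * j) (by omega : 0 < r)
  have hxk := Nat.mod_lt (b * k) (by omega : 0 < r)
  have hjk : min (b * j % r) (r - b * j % r) = min (b * k % r) (r - b * k % r) := hjk
  have hcases : b * j % r = b * k % r ∨ b * j % r + b * k % r = r := by omega
  rcases hcases with h | h
  · have hjk : j % r = k % r := Nat.ModEq.cancel_left_of_coprime hb.symm h
    rw [Nat.mod_eq_of_lt (by omega), Nat.mod_eq_of_lt (by omega)] at hjk
    exact hne hjk
  · refine mul_mod_ne_zero_of_coprime hb (j := j + k) (by omega) (by omega) ?_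
    rw [mul_add, Nat.add_mod, h, Nat.mod_self]

theorem reidL_one_le_reidL {r b m : ℕ} (hb : b.Coprime r) (hm : 2 * m ≤ r + 2) :
    reidL r 1 m ≤ reidL r b m := by
  set d : ℕ → ℕ := fun j => min (b * j % r) (r - b * j % r)
  have hinj := injOn_min_mod_sub_mod hb hm
  have hd : (Icc 1 (m - 1)).image d ⊆ Icc 1 (r / 2) := by
    intro x hx
    obtain ⟨j, hj, rfl⟩ := mem_image.mp hx
    have hj := mem_Icc.mp hj
    have := mul_mod_ne_zero_of_coprime hb (j := j) (by omega) (by omega)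
    have := Nat.mod_lt (b * j) (by omega : 0 < r)
    simp only [d, mem_Icc]
    omega
  calc reidL r 1 m = ∑ i ∈ Icc 1 #((Icc 1 (m - 1)).image d), reidTerm r i := by
        rw [card_image_of_injOn hinj, Nat.card_Icc, Nat.add_sub_cancel, reidL_eq_sum_Icc]
        refine sum_congr rfl fun j hj => ?_
        rw [one_mul, Nat.mod_eq_of_lt (by simp only [mem_Icc] at hj; omega)]
    _ ≤ ∑ x ∈ (Icc 1 (m - 1)).image d, reidTerm r x :=
        sum_Icc_card_le_sum_of_monotoneOn
          ((reidTerm_monotoneOn r).mono Set.Icc_subset_Iic_self) _ hd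
    _ = reidL r b m := by
        rw [sum_image hinj, reidL_eq_sum_Icc]
        refine sum_congr rfl fun j hj => reidTerm_min_sub (Nat.mod_lt _ ?_).le
        simp only [mem_Icc] at hj
        omega

lemma Basket.coprime_binv (Q : Basket) : Q.binv.Coprime Q.r := by
  rw [← ZMod.isUnit_iff_coprime]
  exact .of_mul_eq_one _ (ZMod.val_inv_mul Q.coprime)

/-- For a basket `Q` of index `r ≥ 37`, `l(Q, 18) > 52`; in particular
`l(1/r(1,-1,1), 18) ≥ ∑_{j=1}^{17} j(37-j)/74 > 52`. -/
theorem basket_l_eighteen_gt (Q : Basket) (h : 37 ≤ Q.r) :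
    52 < Q.l 18 ∧
    (∑ j ∈ Finset.range 18, (j : ℚ) * (37 - (j : ℚ)) / 74 ≤ reidL Q.r 1 18) ∧
    52 < ∑ j ∈ Finset.range 18, (j : ℚ) * (37 - (j : ℚ)) / 74 := by
  have hsum : 52 < ∑ j ∈ range 18, (j : ℚ) * (37 - (j : ℚ)) / 74 := by
    norm_num [sum_range_succ]
  have hcmp : ∑ j ∈ range 18, (j : ℚ) * (37 - (j : ℚ)) / 74 ≤ reidL Q.r 1 18 :=
    calc _ = reidL 37 1 18 := by norm_num [reidL, sum_range_succ]
      _ ≤ reidL Q.r 1 18 := reidL_one_le_reidL_one (by norm_num) h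
  have hl : reidL Q.r 1 18 ≤ Q.l 18 := reidL_one_le_reidL Q.coprime_binv (by omega)
  exact ⟨hsum.trans_le (hcmp.trans hl), hcmp, hsum⟩
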